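/- arXiv:1107.1417 — 2 statements merged into one kernel-verified Lean document; each statement's English description precedes it below -/
import Mathlib

section
/- Let 0<q<1, let l be a positive integer and let s ∈ {1,…,l}. Then ∑_{m=1}^{l} (-1)^m q^{m(m-1)} (1 - q^{-2ml}) binom(l,m)_{q^2} · q^{2ms}/(1 - q^{2ml}) = 1. (This is the pairing τ_s(Tr E[1]) = 1 of the cyclic cocycle τ_s with the zero-component of the Chern character of the line bundle L[1]; since it is nonzero, the module L[1] over O(WP_q(1,l)) is not free.) -/
/-- The Gaussian (q-deformed) binomial coefficient
`binom(l,m)_x = ∏_{i=1}^{m} (1 - x^{l-m+i})/(1 - x^i)`. -/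
noncomputable def qbinom (x : ℝ) (l m : ℕ) : ℝ :=
  ∏ i ∈ Finset.range m, (1 - x ^ (l - m + i + 1)) / (1 - x ^ (i + 1))

/-!
With `x = q ^ 2` the factor `(1 - q^{-2ml}) / (1 - q^{2ml})` equals `-q^{-2ml}`, so the `m`-th
summand is `-x^{m(m-1)/2} binom(l,m)_x t^m` for `t = -x^{s-l}`. By the q-binomial theorem the sum
is therefore `1 - ∏_{i<l} (1 + x^i t)`, and this product vanishes: its factor `i = l - s` is
`1 + x^{l-s} t = 0`.
-/

open Finset

noncomputable def qfact (x : ℝ) (n : ℕ) : ℝ :=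
  ∏ i ∈ range n, (1 - x ^ (i + 1))

section QBinomial

variable {x : ℝ}

lemma qfact_succ (n : ℕ) : qfact x (n + 1) = qfact x n * (1 - x ^ (n + 1)) :=
  prod_range_succ _ _

lemma qfact_ne_zero {n : ℕ} (hx : ∀ i < n, x ^ (i + 1) ≠ 1) : qfact x n ≠ 0 :=
  prod_ne_zero_iff.2 fun i hi => sub_ne_zero.2 (hx i (mem_range.1 hi)).symm

lemma qbinom_add_mul_qfact_mul_qfact (m k : ℕ) (hx : ∀ i < m, x ^ (i + 1) ≠ 1) :
    qbinom x (m + k) m * qfact x m * qfact x k = qfact x (m + k) := by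
  have hnum : qbinom x (m + k) m * qfact x m = ∏ i ∈ range m, (1 - x ^ (k + i + 1)) := by
    rw [qbinom, Nat.add_sub_cancel_left, qfact, ← prod_mul_distrib]
    exact prod_congr rfl fun i hi =>
      div_mul_cancel₀ _ (sub_ne_zero.2 (hx i (mem_range.1 hi)).symm)
  rw [hnum, add_comm m k, qfact, qfact, prod_range_add, mul_comm]

lemma qbinom_zero_right (l : ℕ) : qbinom x l 0 = 1 :=
  prod_range_zero _

lemma qbinom_self {l : ℕ} (hx : ∀ i < l, x ^ (i + 1) ≠ 1) : qbinom x l l = 1 :=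
  prod_eq_one fun i hi => by
    rw [Nat.sub_self, zero_add]
    exact div_self (sub_ne_zero.2 (hx i (mem_range.1 hi)).symm)

lemma qbinom_succ_succ {m k : ℕ} (hx : ∀ i < m + k + 2, x ^ (i + 1) ≠ 1) :
    qbinom x (m + k + 2) (m + 1)
      = qbinom x (m + k + 1) (m + 1) + x ^ (k + 1) * qbinom x (m + k + 1) m := by
  have h1 := qbinom_add_mul_qfact_mul_qfact (m + 1) (k + 1) fun i hi => hx i (by omega)
  have h2 := qbinom_add_mul_qfact_mul_qfact (m + 1) k fun i hi => hx i (by omega)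
  have h3 := qbinom_add_mul_qfact_mul_qfact m (k + 1) fun i hi => hx i (by omega)
  rw [show m + 1 + (k + 1) = m + k + 1 + 1 by omega] at h1
  rw [show m + 1 + k = m + k + 1 by omega] at h2
  rw [show m + (k + 1) = m + k + 1 by omega] at h3
  simp only [qfact_succ] at h1 h2 h3
  have hden : qfact x (m + 1) * qfact x (k + 1) ≠ 0 :=
    mul_ne_zero (qfact_ne_zero fun i hi => hx i (by omega))
      (qfact_ne_zero fun i hi => hx i (by omega))
  refine mul_right_cancel₀ hden ?_
  simp only [qfact_succ]
  linear_combination h1 - (1 - x ^ (k + 1)) * h2 - x ^ (k + 1) * (1 - x ^ (m + 1)) * h3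

/-- The coefficient of `t ^ m` in `∏_{i < l} (1 + x ^ i t)`. -/
noncomputable def qbinomCoeff (x : ℝ) (l m : ℕ) : ℝ :=
  if m ≤ l then x ^ m.choose 2 * qbinom x l m else 0

lemma qbinomCoeff_zero_right (l : ℕ) : qbinomCoeff x l 0 = 1 := by
  simp [qbinomCoeff, qbinom_zero_right]

lemma qbinomCoeff_of_lt {l m : ℕ} (h : l < m) : qbinomCoeff x l m = 0 :=
  if_neg h.not_ge

lemma qbinomCoeff_succ_succ {l : ℕ} (hx : ∀ i < l + 1, x ^ (i + 1) ≠ 1) (m : ℕ) :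
    qbinomCoeff x (l + 1) (m + 1) = qbinomCoeff x l (m + 1) + x ^ l * qbinomCoeff x l m := by
  rcases lt_trichotomy m l with h | rfl | h
  · obtain ⟨k, rfl⟩ : ∃ k, l = m + k + 1 := ⟨l - m - 1, by omega⟩
    simp only [qbinomCoeff, if_pos (show m + 1 ≤ m + k + 1 + 1 by omega),
      if_pos (show m + 1 ≤ m + k + 1 by omega), if_pos (show m ≤ m + k + 1 by omega)]
    rw [qbinom_succ_succ hx, Nat.choose_succ_succ, Nat.choose_one_right]
    ring
  · rw [qbinomCoeff_of_lt (Nat.lt_succ_self m), qbinomCoeff, qbinomCoeff, if_pos le_rfl,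
      if_pos le_rfl, qbinom_self hx, qbinom_self fun i hi => hx i (by omega),
      Nat.choose_succ_succ, Nat.choose_one_right]
    ring
  · rw [qbinomCoeff_of_lt (by omega), qbinomCoeff_of_lt (by omega), qbinomCoeff_of_lt h]
    ring

lemma prod_one_add_pow_mul_eq_sum_qbinomCoeff {l : ℕ} (hx : ∀ i < l, x ^ (i + 1) ≠ 1)
    (t : ℝ) :
    ∏ i ∈ range l, (1 + x ^ i * t) = ∑ m ∈ range (l + 1), qbinomCoeff x l m * t ^ m := by
  induction l with
  | zero => simp [qbinomCoeff_zero_right]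
  | succ l ih =>
    set S := ∑ m ∈ range (l + 1), qbinomCoeff x l m * t ^ m
    have hshift : ∑ m ∈ range (l + 1), qbinomCoeff x l (m + 1) * t ^ (m + 1) + 1 = S := by
      have := sum_range_succ' (fun m => qbinomCoeff x l m * t ^ m) (l + 1)
      rw [sum_range_succ, qbinomCoeff_of_lt (Nat.lt_succ_self l), qbinomCoeff_zero_right]
        at this
      simpa using this.symm
    have hmul :
        ∑ m ∈ range (l + 1), x ^ l * qbinomCoeff x l m * t ^ (m + 1) = x ^ l * t * S := by
      rw [mul_sum]
      exact sum_congr rfl fun _ _ => by ring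
    rw [prod_range_succ, ih fun i hi => hx i (by omega), sum_range_succ' _ (l + 1)]
    simp only [qbinomCoeff_succ_succ hx, add_mul, sum_add_distrib, qbinomCoeff_zero_right]
    linear_combination -hshift - hmul

theorem prod_one_add_pow_mul_eq_sum_qbinom {l : ℕ} (hx : ∀ i < l, x ^ (i + 1) ≠ 1) (t : ℝ) :
    ∏ i ∈ range l, (1 + x ^ i * t)
      = ∑ m ∈ range (l + 1), x ^ m.choose 2 * qbinom x l m * t ^ m := by
  rw [prod_one_add_pow_mul_eq_sum_qbinomCoeff hx]
  exact sum_congr rfl fun m hm => by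
    rw [qbinomCoeff, if_pos (Nat.lt_succ_iff.1 (mem_range.1 hm))]

end QBinomial

lemma pow_mul_sub_one_eq_sq_pow_choose_two {M : Type*} [Monoid M] (a : M) (m : ℕ) :
    a ^ (m * (m - 1)) = (a ^ 2) ^ m.choose 2 := by
  rw [← pow_mul, Nat.choose_two_right, Nat.mul_div_cancel' (Nat.even_mul_pred_self m).two_dvd]

lemma pairing_summand_eq {q : ℝ} (hq : q ≠ 0) {l m : ℕ} (h : q ^ (2 * m * l) ≠ 1) (s : ℕ)
    (b : ℝ) :
    (-1 : ℝ) ^ m * q ^ (m * (m - 1)) * (1 - (q ^ (2 * m * l))⁻¹) * b *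
        (q ^ (2 * m * s) / (1 - q ^ (2 * m * l)))
      = -((q ^ 2) ^ m.choose 2 * b * (-((q ^ 2) ^ s / (q ^ 2) ^ l)) ^ m) := by
  have h' : 1 - q ^ (2 * m * l) ≠ 0 := sub_ne_zero.2 h.symm
  rw [pow_mul_sub_one_eq_sq_pow_choose_two, neg_pow ((q ^ 2) ^ s / (q ^ 2) ^ l), div_pow,
    show ((q ^ 2) ^ s) ^ m = q ^ (2 * m * s) by ring,
    show ((q ^ 2) ^ l) ^ m = q ^ (2 * m * l) by ring]
  field_simp
  ring

theorem pairing_chern_character_general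
    (q : ℝ) (hq0 : 0 < q) (hq1 : q < 1) (l : ℕ)
    (s : ℕ) (hs1 : 1 ≤ s) (hsl : s ≤ l) :
    ∑ m ∈ Finset.Icc 1 l,
      (-1 : ℝ) ^ m * q ^ (m * (m - 1)) * (1 - (q ^ (2 * m * l))⁻¹) *
        qbinom (q ^ 2) l m * (q ^ (2 * m * s) / (1 - q ^ (2 * m * l))) = 1 := by
  have hpow_lt {n : ℕ} (hn : n ≠ 0) : q ^ n < 1 := pow_lt_one₀ hq0.le hq1 hn
  set x := q ^ 2
  set t : ℝ := -(x ^ s / x ^ l)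
  have hroot : 1 + x ^ (l - s) * t = 0 := by
    have hx : x ^ (l - s) * x ^ s = x ^ l := by rw [← pow_add, Nat.sub_add_cancel hsl]
    rw [mul_neg, ← mul_div_assoc, hx, div_self (pow_ne_zero _ (pow_ne_zero _ hq0.ne'))]
    ring
  have hgen := prod_one_add_pow_mul_eq_sum_qbinom (l := l)
    (fun i _ => (show x ^ (i + 1) < 1 by rw [← pow_mul]; exact hpow_lt (by omega)).ne) t
  rw [prod_eq_zero (mem_range.2 (by omega)) hroot, Nat.range_succ_eq_Icc_zero,
    Icc_eq_cons_Ioc (Nat.zero_le _), sum_cons, ← Icc_add_one_left_eq_Ioc, zero_add] at hgen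
  simp only [Nat.choose_zero_succ, qbinom_zero_right, pow_zero, one_mul] at hgen
  have hml {m : ℕ} (hm : m ∈ Icc 1 l) : 2 * m * l ≠ 0 := by
    rw [mem_Icc] at hm
    exact mul_ne_zero (mul_ne_zero two_ne_zero (by omega)) (by omega)
  rw [sum_congr rfl fun m hm => pairing_summand_eq hq0.ne' (hpow_lt (hml hm)).ne s (qbinom x l m),
    sum_neg_distrib]
  linarith

/-- For `s ∈ {1, …, l}`,
`∑_{m=1}^{l} (-1)^m q^{m(m-1)} (1 - q^{-2ml}) binom(l,m)_{q^2} · q^{2ms}/(1 - q^{2ml}) = 1`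
(the pairing `τ_s(Tr E[1]) = 1`; hence the module `L[1]` over `O(WP_q(1,l))` is not free). -/
theorem pairing_chern_character
    (q : ℝ) (hq0 : 0 < q) (hq1 : q < 1) (l : ℕ) (hl : 0 < l)
    (s : ℕ) (hs1 : 1 ≤ s) (hsl : s ≤ l) :
    ∑ m ∈ Finset.Icc 1 l,
      (-1 : ℝ) ^ m * q ^ (m * (m - 1)) * (1 - (q ^ (2 * m * l))⁻¹) *
        qbinom (q ^ 2) l m * (q ^ (2 * m * s) / (1 - q ^ (2 * m * l))) = 1 :=
  pairing_chern_character_general q hq0 hq1 l s hs1 hsl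
end

section
/- Let 0<q<1, let l be a positive integer, let s ∈ {1,…,l} and let λ ∈ ℂ with |λ| = 1. The bounded operators C, D on ℓ²(ℕ) defined by C e_0 = 0, C e_p = ∏_{m=1}^{l}(1 - q^{2(pl+s-m)})^{1/2} e_{p-1} for p ≥ 1, and D e_p = λ q^{pl+s} e_p satisfy CD = q^l DC, CD* = q^l D*C, DD* = D*D, CC* = ∏_{m=0}^{l-1}(1 - q^{2m} DD*), and C*C = ∏_{m=1}^{l}(1 - q^{-2m} DD*). Consequently c ↦ C, d ↦ D defines a unital *-representation π_s^λ of O(L_q(l;1,l)) on ℓ²(ℕ). -/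
/-- The defining relations of the quantum lens space `O(L_q(l;1,l))`:
`cd = q^l dc`, `cd* = q^l d*c`, `dd* = d*d`, `cc* = ∏_{m=0}^{l-1}(1-q^{2m}dd*)`,
`c*c = ∏_{m=1}^{l}(1-q^{-2m}dd*)`. -/
structure LensRels {A : Type*} [Ring A] [Algebra ℂ A] [StarRing A]
    (q : ℝ) (l : ℕ) (c d : A) : Prop where
  rel1 : c * d = ((q : ℂ) ^ l) • (d * c)
  rel2 : c * star d = ((q : ℂ) ^ l) • (star d * c)
  rel3 : d * star d = star d * d
  rel4 : c * star c =
      ((List.range l).map (fun m => 1 - ((q : ℂ) ^ (2 * m)) • (d * star d))).prod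
  rel5 : star c * c =
      ((List.range l).map (fun m => 1 - ((q : ℂ)⁻¹ ^ (2 * (m + 1))) • (d * star d))).prod

/-- `A` together with `c d : A` is the universal unital complex `*`-algebra on
generators `c, d` subject to the `O(L_q(l;1,l))` relations. -/
def IsUniversalLens (q : ℝ) (l : ℕ) {A : Type*} [Ring A] [Algebra ℂ A] [StarRing A]
    [StarModule ℂ A] (c d : A) : Prop :=
  LensRels q l c d ∧
  ∀ (B : Type) [Ring B] [Algebra ℂ B] [StarRing B] [StarModule ℂ B],
    ∀ c' d' : B, LensRels q l c' d' → ∃! f : A →⋆ₐ[ℂ] B, f c = c' ∧ f d = d'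

noncomputable section

/-- The Hilbert space `ℓ²(ℕ)` of square-summable complex sequences. -/
abbrev ℓ2 : Type := lp (fun _ : ℕ => ℂ) 2

/-- The standard orthonormal basis vectors of `ℓ²(ℕ)`. -/
def e (p : ℕ) : ℓ2 := lp.single 2 p 1

/-! $C$ is a weighted backward shift, $C e_{p+1} = w_p e_p$, and $D$ is diagonal,
$D e_p = \mu_p e_p$; so $C^*$ is the forward shift with weights $\bar w_p$ and $DD^* = D^*D$ is
diagonal with eigenvalues $|\mu_p|^2 = q^{2(pl+s)}$. Each relation then holds on every $e_p$ by a
scalar identity: $\mu_{p+1} = q^l \mu_p$ for the commutation relations, and for the product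
relations $w_p^2 = \prod_{m<l} (1 - q^{2((p+1)l+s) - 2(m+1)})$, which becomes
$\prod_{m<l} (1 - q^{2m} q^{2(pl+s)})$ under the reflection $m \mapsto l-1-m$. On $e_0$,
$C^*C e_0 = 0$ matches the vanishing factor $m = s - 1$ of
$\prod_{m<l} (1 - q^{-2(m+1)} q^{2s})$. -/

open scoped InnerProductSpace

lemma inner_e_left (p : ℕ) (x : ℓ2) : ⟪e p, x⟫_ℂ = x p := by
  simp [e, lp.inner_single_left]

lemma inner_e_e (p r : ℕ) : ⟪e p, e r⟫_ℂ = if p = r then 1 else 0 := by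
  rw [inner_e_left, e, lp.single_apply, Pi.single_apply]

lemma ext_e {T S : ℓ2 →L[ℂ] ℓ2} (h : ∀ p, T (e p) = S (e p)) : T = S :=
  lp.ext_continuousLinearMap ENNReal.ofNat_ne_top fun p => ContinuousLinearMap.ext_ring (h p)

lemma star_apply_e_eq_of_inner {T : ℓ2 →L[ℂ] ℓ2} {p : ℕ} {y : ℓ2}
    (h : ∀ r, ⟪T (e r), e p⟫_ℂ = ⟪e r, y⟫_ℂ) : star T (e p) = y := by
  refine lp.ext (funext fun r => ?_)
  rw [← inner_e_left, ← inner_e_left, ContinuousLinearMap.star_eq_adjoint,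
    ContinuousLinearMap.adjoint_inner_right, h]

lemma List.prod_map_range (n : ℕ) {M : Type*} [CommMonoid M] (f : ℕ → M) :
    ((List.range n).map f).prod = ∏ i ∈ Finset.range n, f i := rfl

lemma list_prod_map_apply_of_forall_apply_eq_smul {ι 𝕜 E : Type*} [CommSemiring 𝕜]
    [TopologicalSpace E] [AddCommMonoid E] [Module 𝕜 E] (M : List ι) (T : ι → E →L[𝕜] E)
    (a : ι → 𝕜) {x : E} (h : ∀ i ∈ M, T i x = a i • x) :
    (M.map T).prod x = (M.map a).prod • x := by
  induction M with
  | nil => simp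
  | cons i M ih =>
    simp only [List.forall_mem_cons] at h
    rw [List.map_cons, List.prod_cons, mul_apply_eq_comp, ih h.2, map_smul, h.1,
      List.map_cons, List.prod_cons, smul_smul, mul_comm]

section WeightedShift

variable {C D : ℓ2 →L[ℂ] ℓ2} {w μ : ℕ → ℂ}

lemma star_apply_e_of_weightedShift (hC0 : C (e 0) = 0) (hC : ∀ p, C (e (p + 1)) = w p • e p)
    (p : ℕ) : star C (e p) = star (w p) • e (p + 1) := by
  refine star_apply_e_eq_of_inner fun r => ?_
  cases r with
  | zero => simp [hC0, inner_e_e]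
  | succ r =>
    simp only [hC, inner_smul_left, inner_smul_right, inner_e_e, add_left_inj]
    by_cases hrp : r = p <;> simp [hrp]

lemma star_apply_e_of_diagonal (hD : ∀ p, D (e p) = μ p • e p) (p : ℕ) :
    star D (e p) = star (μ p) • e p := by
  refine star_apply_e_eq_of_inner fun r => ?_
  simp only [hD, inner_smul_left, inner_smul_right, inner_e_e]
  by_cases hrp : r = p <;> simp [hrp]

lemma mul_star_apply_e_of_diagonal (hD : ∀ p, D (e p) = μ p • e p) (p : ℕ) :
    (D * star D) (e p) = (‖μ p‖ ^ 2 : ℂ) • e p := by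
  rw [mul_apply_eq_comp, star_apply_e_of_diagonal hD, map_smul, hD, smul_smul,
    Complex.star_def, Complex.conj_mul']

lemma star_mul_apply_e_of_diagonal (hD : ∀ p, D (e p) = μ p • e p) (p : ℕ) :
    (star D * D) (e p) = (‖μ p‖ ^ 2 : ℂ) • e p := by
  rw [mul_apply_eq_comp, hD, map_smul, star_apply_e_of_diagonal hD, smul_smul,
    Complex.star_def, Complex.mul_conj']

lemma mul_star_apply_e_of_weightedShift (hC0 : C (e 0) = 0)
    (hC : ∀ p, C (e (p + 1)) = w p • e p) (p : ℕ) :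
    (C * star C) (e p) = (‖w p‖ ^ 2 : ℂ) • e p := by
  rw [mul_apply_eq_comp, star_apply_e_of_weightedShift hC0 hC, map_smul, hC, smul_smul,
    Complex.star_def, Complex.conj_mul']

lemma star_mul_apply_e_succ_of_weightedShift (hC0 : C (e 0) = 0)
    (hC : ∀ p, C (e (p + 1)) = w p • e p) (p : ℕ) :
    (star C * C) (e (p + 1)) = (‖w p‖ ^ 2 : ℂ) • e (p + 1) := by
  rw [mul_apply_eq_comp, hC, map_smul, star_apply_e_of_weightedShift hC0 hC, smul_smul,
    Complex.star_def, Complex.mul_conj']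

lemma weightedShift_mul_diagonal (hC0 : C (e 0) = 0) (hC : ∀ p, C (e (p + 1)) = w p • e p)
    (hD : ∀ p, D (e p) = μ p • e p) {a : ℂ} (hμ : ∀ p, μ (p + 1) = a * μ p) :
    C * D = a • (D * C) := by
  refine ext_e fun p => ?_
  cases p with
  | zero => simp [mul_apply_eq_comp, hD, hC0]
  | succ p =>
    simp only [mul_apply_eq_comp, smul_apply, hD, hC, map_smul, smul_smul, hμ]
    congr 1
    ring

lemma list_prod_map_one_sub_smul_mul_star_apply_e (hD : ∀ p, D (e p) = μ p • e p)
    (M : List ℕ) (a : ℕ → ℂ) (p : ℕ) :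
    (M.map fun m => 1 - a m • (D * star D)).prod (e p) =
      (M.map fun m => 1 - a m * ‖μ p‖ ^ 2).prod • e p :=
  list_prod_map_apply_of_forall_apply_eq_smul M _ _ fun m _ => by
    rw [sub_apply, one_apply_eq_self, smul_apply, mul_star_apply_e_of_diagonal hD, smul_smul,
      sub_smul, one_smul]

lemma diagonal_mul_star_comm (hD : ∀ p, D (e p) = μ p • e p) : D * star D = star D * D :=
  ext_e fun p => by rw [mul_star_apply_e_of_diagonal hD, star_mul_apply_e_of_diagonal hD]

lemma weightedShift_mul_star_eq_list_prod (hC0 : C (e 0) = 0)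
    (hC : ∀ p, C (e (p + 1)) = w p • e p) (hD : ∀ p, D (e p) = μ p • e p)
    (M : List ℕ) (a : ℕ → ℂ)
    (hw : ∀ p, (‖w p‖ ^ 2 : ℂ) = (M.map fun m => 1 - a m * ‖μ p‖ ^ 2).prod) :
    C * star C = (M.map fun m => 1 - a m • (D * star D)).prod :=
  ext_e fun p => by
    rw [mul_star_apply_e_of_weightedShift hC0 hC, list_prod_map_one_sub_smul_mul_star_apply_e hD,
      hw]

lemma star_mul_weightedShift_eq_list_prod (hC0 : C (e 0) = 0)
    (hC : ∀ p, C (e (p + 1)) = w p • e p) (hD : ∀ p, D (e p) = μ p • e p)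
    (M : List ℕ) (a : ℕ → ℂ) (h0 : (M.map fun m => 1 - a m * ‖μ 0‖ ^ 2).prod = 0)
    (hw : ∀ p, (‖w p‖ ^ 2 : ℂ) = (M.map fun m => 1 - a m * ‖μ (p + 1)‖ ^ 2).prod) :
    star C * C = (M.map fun m => 1 - a m • (D * star D)).prod := by
  refine ext_e fun p => ?_
  rw [list_prod_map_one_sub_smul_mul_star_apply_e hD]
  cases p with
  | zero => rw [mul_apply_eq_comp, hC0, map_zero, h0, zero_smul]
  | succ p => rw [star_mul_apply_e_succ_of_weightedShift hC0 hC, hw]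

theorem lensRels_of_weightedShift_of_diagonal {q : ℝ} {l : ℕ} (hC0 : C (e 0) = 0)
    (hC : ∀ p, C (e (p + 1)) = w p • e p) (hD : ∀ p, D (e p) = μ p • e p)
    (hμ : ∀ p, μ (p + 1) = (q : ℂ) ^ l * μ p)
    (hw_left : ∀ p, (‖w p‖ ^ 2 : ℂ) =
      ((List.range l).map fun m => 1 - (q : ℂ) ^ (2 * m) * ‖μ p‖ ^ 2).prod)
    (hw_right : ∀ p, (‖w p‖ ^ 2 : ℂ) =
      ((List.range l).map fun m => 1 - (q : ℂ)⁻¹ ^ (2 * (m + 1)) * ‖μ (p + 1)‖ ^ 2).prod)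
    (h0 : ((List.range l).map fun m => 1 - (q : ℂ)⁻¹ ^ (2 * (m + 1)) * ‖μ 0‖ ^ 2).prod =
      0) :
    LensRels q l C D where
  rel1 := weightedShift_mul_diagonal hC0 hC hD hμ
  rel2 := weightedShift_mul_diagonal hC0 hC (star_apply_e_of_diagonal hD) fun p => by
    rw [hμ, star_mul, mul_comm, star_pow, Complex.star_def, Complex.conj_ofReal]
  rel3 := diagonal_mul_star_comm hD
  rel4 := weightedShift_mul_star_eq_list_prod hC0 hC hD _ _ hw_left
  rel5 := star_mul_weightedShift_eq_list_prod hC0 hC hD _ _ h0 hw_right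

end WeightedShift

def lensWeight (q : ℝ) (l s p : ℕ) : ℝ :=
  ∏ m ∈ Finset.range l, √(1 - q ^ (2 * (p * l + s) - 2 * (m + 1)))

section LensWeight

variable {q : ℝ} (l s p : ℕ)

lemma lensWeight_sq (hq0 : 0 ≤ q) (hq1 : q ≤ 1) :
    lensWeight q l s p ^ 2 =
      ∏ m ∈ Finset.range l, (1 - q ^ (2 * (p * l + s) - 2 * (m + 1))) := by
  rw [lensWeight, ← Finset.prod_pow]
  exact Finset.prod_congr rfl fun m _ => Real.sq_sqrt (sub_nonneg.2 (pow_le_one₀ hq0 hq1))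

lemma lensWeight_succ_sq_eq_prod_left (hq0 : 0 ≤ q) (hq1 : q ≤ 1) :
    lensWeight q l s (p + 1) ^ 2 =
      ∏ m ∈ Finset.range l, (1 - q ^ (2 * m) * (q ^ (p * l + s)) ^ 2) := by
  rw [lensWeight_sq l s (p + 1) hq0 hq1, ← Finset.prod_range_reflect]
  refine Finset.prod_congr rfl fun m hm => ?_
  have hml := Finset.mem_range.1 hm
  have hpl := add_one_mul p l
  rw [← pow_mul, ← pow_add]
  congr 2
  omega

lemma lensWeight_succ_sq_eq_prod_right (hq0 : 0 < q) (hq1 : q ≤ 1) :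
    lensWeight q l s (p + 1) ^ 2 =
      ∏ m ∈ Finset.range l, (1 - q⁻¹ ^ (2 * (m + 1)) * (q ^ ((p + 1) * l + s)) ^ 2) := by
  rw [lensWeight_sq l s (p + 1) hq0.le hq1]
  refine Finset.prod_congr rfl fun m hm => ?_
  have hml := Finset.mem_range.1 hm
  have hpl := add_one_mul p l
  rw [pow_sub₀ q hq0.ne' (by omega), ← pow_mul, inv_pow, mul_comm, mul_comm _ 2]

end LensWeight

lemma prod_one_sub_inv_pow_mul_pow_eq_zero {q : ℝ} (hq : q ≠ 0) {l s : ℕ} (hs1 : 1 ≤ s)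
    (hsl : s ≤ l) :
    ∏ m ∈ Finset.range l, (1 - q⁻¹ ^ (2 * (m + 1)) * (q ^ s) ^ 2) = 0 :=
  Finset.prod_eq_zero (i := s - 1) (Finset.mem_range.2 (by omega)) <| by
    rw [Nat.sub_add_cancel hs1, ← pow_mul, mul_comm s 2, inv_pow,
      inv_mul_cancel₀ (pow_ne_zero _ hq), sub_self]

theorem lens_space_representation_general
    (q : ℝ) (hq0 : 0 < q) (hq1 : q < 1) (l : ℕ)
    (s : ℕ) (hs1 : 1 ≤ s) (hsl : s ≤ l)
    (lam : ℂ) (hlam : ‖lam‖ = 1)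
    (C D : ℓ2 →L[ℂ] ℓ2)
    (hC0 : C (e 0) = 0)
    (hC : ∀ p : ℕ, C (e (p + 1)) =
      ((∏ m ∈ Finset.range l,
        Real.sqrt (1 - q ^ (2 * ((p + 1) * l + s) - 2 * (m + 1))) : ℝ) : ℂ) • e p)
    (hD : ∀ p : ℕ, D (e p) = (lam * (q : ℂ) ^ (p * l + s)) • e p)
    {L : Type*} [Ring L] [Algebra ℂ L] [StarRing L] [StarModule ℂ L]
    (c d : L) (hL : IsUniversalLens q l c d) :
    LensRels q l C D ∧
      ∃ π : L →⋆ₐ[ℂ] (ℓ2 →L[ℂ] ℓ2), π c = C ∧ π d = D := by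
  have hμ_norm : ∀ p, ‖lam * (q : ℂ) ^ (p * l + s)‖ = q ^ (p * l + s) := fun p => by
    rw [norm_mul, hlam, one_mul, norm_pow, Complex.norm_real, Real.norm_of_nonneg hq0.le]
  have hrels : LensRels q l C D := by
    refine lensRels_of_weightedShift_of_diagonal (w := fun p => (lensWeight q l s (p + 1) : ℂ))
      hC0 hC hD (fun p => ?_) (fun p => ?_) (fun p => ?_) ?_
    · rw [add_one_mul, add_right_comm, pow_add]
      ring
    · rw [hμ_norm, Complex.norm_real, Real.norm_eq_abs, List.prod_map_range]
      exact_mod_cast (sq_abs _).trans (lensWeight_succ_sq_eq_prod_left l s p hq0.le hq1.le)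
    · rw [hμ_norm, Complex.norm_real, Real.norm_eq_abs, List.prod_map_range]
      exact_mod_cast (sq_abs _).trans (lensWeight_succ_sq_eq_prod_right l s p hq0 hq1.le)
    · rw [hμ_norm, zero_mul, zero_add, List.prod_map_range]
      exact_mod_cast prod_one_sub_inv_pow_mul_pow_eq_zero hq0.ne' hs1 hsl
  obtain ⟨π, hπ, -⟩ := hL.2 _ C D hrels
  exact ⟨hrels, π, hπ⟩

/-- For `s ∈ {1, …, l}` and `λ ∈ ℂ` with `|λ| = 1`, the bounded
operators `C, D` on `ℓ²(ℕ)` given by `C e_0 = 0`,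
`C e_p = ∏_{m=1}^{l}(1 - q^{2(pl+s-m)})^{1/2} e_{p-1}` for `p ≥ 1` and
`D e_p = λ q^{pl+s} e_p` satisfy the defining relations of `O(L_q(l;1,l))`, and hence
`c ↦ C`, `d ↦ D` defines a unital `*`-representation `π_s^λ` of `O(L_q(l;1,l))`. -/
theorem lens_space_representation
    (q : ℝ) (hq0 : 0 < q) (hq1 : q < 1) (l : ℕ) (hl : 0 < l)
    (s : ℕ) (hs1 : 1 ≤ s) (hsl : s ≤ l)
    (lam : ℂ) (hlam : ‖lam‖ = 1)
    (C D : ℓ2 →L[ℂ] ℓ2)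
    (hC0 : C (e 0) = 0)
    (hC : ∀ p : ℕ, C (e (p + 1)) =
      ((∏ m ∈ Finset.range l,
        Real.sqrt (1 - q ^ (2 * ((p + 1) * l + s) - 2 * (m + 1))) : ℝ) : ℂ) • e p)
    (hD : ∀ p : ℕ, D (e p) = (lam * (q : ℂ) ^ (p * l + s)) • e p)
    {L : Type*} [Ring L] [Algebra ℂ L] [StarRing L] [StarModule ℂ L]
    (c d : L) (hL : IsUniversalLens q l c d) :
    LensRels q l C D ∧
      ∃ π : L →⋆ₐ[ℂ] (ℓ2 →L[ℂ] ℓ2), π c = C ∧ π d = D :=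
  lens_space_representation_general q hq0 hq1 l s hs1 hsl lam hlam C D hC0 hC hD c d hL
end
end
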